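/- Let q ≥ 3 be a real number, ε a real number, and d, a integers with d ≥ 2 and 0 ≤ a ≤ d−2. Then |λ_1^a| − |λ_d^a| is positive if ε > 1, equal to 0 if ε = 1, and negative if ε < 1. -/
import Mathlib


/-- The Gaussian binomial coefficient `C_q(n,k)` for a real `q > 1` and integers `n, k`:
`∏_{i=1}^{k} (q^{n−i+1} − 1)/(q^i − 1)` if `0 ≤ k ≤ n`, and `0` otherwise. -/
noncomputable def gaussBinom (q : ℝ) (n k : ℤ) : ℝ :=
  if 0 ≤ k ∧ k ≤ n then
    ∏ i ∈ Finset.Icc (1 : ℤ) k, (q ^ (n - i + 1) - 1) / (q ^ i - 1)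
  else 0

/-- `binom(m,2) = m(m−1)/2`, as a real number. -/
noncomputable def binom2 (m : ℤ) : ℝ := ((m * (m - 1) : ℤ) : ℝ) / 2

/-- `A(r,s,a) := C_q(d−r,s) q^{binom(d−r−s,2) + (d−r−s)ε} C_q(r−1, a−s) q^{binom(r−a+s,2)}`. -/
noncomputable def Aval (q ε : ℝ) (d r s a : ℤ) : ℝ :=
  gaussBinom q (d - r) s * q ^ (binom2 (d - r - s) + ((d - r - s : ℤ) : ℝ) * ε) *
    gaussBinom q (r - 1) (a - s) * q ^ binom2 (r - a + s)

/-- `λ_r^a := (−1)^{r+a} Σ_{s=max(a−r+1,0)}^{min(a,d−r)} (−1)^s A(r,s,a)`. -/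
noncomputable def lamVal (q ε : ℝ) (d r a : ℤ) : ℝ :=
  (-1 : ℝ) ^ (r + a) *
    ∑ s ∈ Finset.Icc (max (a - r + 1) 0) (min a (d - r)),
      (-1 : ℝ) ^ s * Aval q ε d r s a

lemma gB_pos' (q : ℝ) (hq : 1 < q) (n k : ℤ) (h0 : 0 ≤ k) (h1 : k ≤ n) :
    0 < gaussBinom q n k := by
  rw [gaussBinom, if_pos ⟨h0, h1⟩]
  apply Finset.prod_pos
  intro i hi
  simp only [Finset.mem_Icc] at hi
  apply div_pos
  · have : 1 < q ^ (n - i + 1) := one_lt_zpow₀ hq (by omega)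
    linarith
  · have : 1 < q ^ i := one_lt_zpow₀ hq (by omega)
    linarith

lemma gB_zero' (q : ℝ) : gaussBinom q 0 0 = 1 := by
  rw [gaussBinom, if_pos ⟨le_refl 0, le_refl 0⟩]
  simp

lemma abs_neg_one_zpow' (k : ℤ) : |(-1 : ℝ) ^ k| = 1 := by
  rcases Int.even_or_odd k with h | h
  · rw [h.neg_one_zpow]; simp
  · rw [Odd.neg_one_zpow h]; simp

theorem stmt8 (q ε : ℝ) (hq : 3 ≤ q) (d a : ℤ) (hd : 2 ≤ d)
    (ha : 0 ≤ a) (had : a ≤ d - 2) :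
    (1 < ε → 0 < |lamVal q ε d 1 a| - |lamVal q ε d d a|) ∧
    (ε = 1 → |lamVal q ε d 1 a| - |lamVal q ε d d a| = 0) ∧
    (ε < 1 → |lamVal q ε d 1 a| - |lamVal q ε d d a| < 0) := by
  have hq1 : (1 : ℝ) < q := by linarith
  have hq0 : (0 : ℝ) < q := by linarith
  set C := gaussBinom q (d - 1) a with hC
  have hCpos : 0 < C := gB_pos' q hq1 _ _ ha (by omega)
  set E1 : ℝ := binom2 (d - 1 - a) + ((d - 1 - a : ℤ) : ℝ) * ε with hE1
  set E2 : ℝ := binom2 (d - a) with hE2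
  have hA1 : Aval q ε d 1 a a = C * q ^ E1 := by
    rw [Aval, show (1 : ℤ) - 1 = 0 by ring, show a - a = 0 by ring, gB_zero',
      show (1 : ℤ) - a + a = 1 by ring, show binom2 1 = 0 by simp [binom2],
      Real.rpow_zero, hC, hE1]
    ring
  have hAd : Aval q ε d d 0 a = C * q ^ E2 := by
    rw [Aval, show d - d = 0 by ring, gB_zero', show (0 : ℤ) - 0 = 0 by ring,
      show ((0 : ℤ) : ℝ) = 0 by norm_num,
      show binom2 0 = 0 by simp [binom2], show d - a + 0 = d - a by ring,
      show a - 0 = a by ring, hC, hE2]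
    rw [show (0 : ℝ) + 0 * ε = 0 by ring, Real.rpow_zero]
    ring
  have h1 : lamVal q ε d 1 a = (-1 : ℝ) ^ (1 + a) * ((-1 : ℝ) ^ a * (C * q ^ E1)) := by
    rw [lamVal, show max (a - 1 + 1) 0 = a by omega, show min a (d - 1) = a by omega,
      Finset.Icc_self, Finset.sum_singleton, hA1]
  have hd2 : lamVal q ε d d a = (-1 : ℝ) ^ (d + a) * ((-1 : ℝ) ^ (0 : ℤ) * (C * q ^ E2)) := by
    rw [lamVal, show max (a - d + 1) 0 = 0 by omega, show min a (d - d) = 0 by omega,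
      Finset.Icc_self, Finset.sum_singleton, hAd]
  have hpos1 : 0 < C * q ^ E1 := mul_pos hCpos (Real.rpow_pos_of_pos hq0 _)
  have hpos2 : 0 < C * q ^ E2 := mul_pos hCpos (Real.rpow_pos_of_pos hq0 _)
  have habs1 : |lamVal q ε d 1 a| = C * q ^ E1 := by
    rw [h1, abs_mul, abs_mul, abs_neg_one_zpow', abs_neg_one_zpow', one_mul, one_mul]
    exact abs_of_pos hpos1
  have habsd : |lamVal q ε d d a| = C * q ^ E2 := by
    rw [hd2, abs_mul, abs_mul, abs_neg_one_zpow', abs_neg_one_zpow', one_mul, one_mul]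
    exact abs_of_pos hpos2
  rw [habs1, habsd]
  have hEdiff : E1 - E2 = ((d - 1 - a : ℤ) : ℝ) * (ε - 1) := by
    rw [hE1, hE2, binom2, binom2]
    push_cast
    ring
  have hm : (0 : ℝ) < ((d - 1 - a : ℤ) : ℝ) := by
    have h' : (1 : ℤ) ≤ d - 1 - a := by omega
    exact_mod_cast lt_of_lt_of_le zero_lt_one h'
  refine ⟨fun hε => ?_, fun hε => ?_, fun hε => ?_⟩
  · have hlt : E2 < E1 := by nlinarith
    have := (Real.rpow_lt_rpow_left_iff (x := q) hq1).mpr hlt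
    nlinarith
  · have heq : E1 = E2 := by
      have : E1 - E2 = 0 := by rw [hEdiff, hε]; ring
      linarith
    rw [heq]; ring
  · have hlt : E1 < E2 := by nlinarith
    have := (Real.rpow_lt_rpow_left_iff (x := q) hq1).mpr hlt
    nlinarith
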